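/- Let φ₀, φ₁, …, φ_n : ℝ → ℝ be differentiable functions with φⱼ = φ_{j-1} + aⱼ·φ'_{j-1} for j = 1,…,n, where each aⱼ > 0. Suppose φⱼ(0) ≤ 0 for all j = 0,…,n, and for all t ≥ 0, φ_n(t) ≥ 0 implies φ'_n(t) < 0. Then for all t ≥ 0 and all j = 0,…,n, φⱼ(t) ≤ 0. -/

import Mathlib

/-!
Since `φ_n` must strictly decrease whenever it reaches `0`, it can never become positive: this is
the comparison principle against the barrier `0`. Going down the chain, `φ_j ≤ 0` reads
`φ_{j-1} + a_j φ'_{j-1} ≤ 0`, i.e. `φ'_{j-1} ≤ -φ_{j-1} / a_j`, and Grönwall's inequality with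
initial value `φ_{j-1}(0) ≤ 0` gives `φ_{j-1} ≤ 0`.
-/

open Set

lemma nonpos_of_deriv_neg_of_nonneg {f : ℝ → ℝ} (hf : Differentiable ℝ f) {t₀ : ℝ}
    (h₀ : f t₀ ≤ 0) (hdec : ∀ t, t₀ ≤ t → 0 ≤ f t → deriv f t < 0) {t : ℝ} (ht : t₀ ≤ t) :
    f t ≤ 0 :=
  image_le_of_deriv_right_lt_deriv_boundary (B := fun _ => 0) (B' := fun _ => 0)
    hf.continuous.continuousOn (fun x _ => (hf x).hasDerivAt.hasDerivWithinAt) h₀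
    (fun _ => hasDerivAt_const _ _) (fun x hx hfx => hdec x hx.1 hfx.ge) ⟨ht, le_rfl⟩

lemma nonpos_of_add_mul_deriv_nonpos {f : ℝ → ℝ} (hf : Differentiable ℝ f) {c t₀ : ℝ}
    (hc : 0 < c) (h₀ : f t₀ ≤ 0) (hle : ∀ t, t₀ ≤ t → f t + c * deriv f t ≤ 0) {t : ℝ}
    (ht : t₀ ≤ t) : f t ≤ 0 := by
  have hbound : ∀ x ∈ Ico t₀ t, deriv f x ≤ -c⁻¹ * f x + 0 := by
    intro x hx
    calc deriv f x = c⁻¹ * (c * deriv f x) := (inv_mul_cancel_left₀ hc.ne' _).symm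
      _ ≤ c⁻¹ * -f x := mul_le_mul_of_nonneg_left (by linarith [hle x hx.1]) (by positivity)
      _ = -c⁻¹ * f x + 0 := by ring
  simpa only [gronwallBound_ε0_δ0] using
    le_gronwallBound_of_liminf_deriv_right_le hf.continuous.continuousOn
      (fun x _ _ hr => (hf x).hasDerivAt.hasDerivWithinAt.liminf_right_slope_le hr)
      h₀ hbound t ⟨ht, le_rfl⟩

theorem stmt_13 (n : ℕ) (φ : ℕ → ℝ → ℝ) (a : ℕ → ℝ)
    (hd : ∀ j ≤ n, Differentiable ℝ (φ j))
    (ha : ∀ j, 1 ≤ j → j ≤ n → 0 < a j)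
    (hrec : ∀ j, 1 ≤ j → j ≤ n → ∀ t, φ j t = φ (j - 1) t + a j * deriv (φ (j - 1)) t)
    (h0 : ∀ j ≤ n, φ j 0 ≤ 0)
    (hdec : ∀ t : ℝ, 0 ≤ t → 0 ≤ φ n t → deriv (φ n) t < 0) :
    ∀ t : ℝ, 0 ≤ t → ∀ j ≤ n, φ j t ≤ 0 := by
  intro t ht j hj
  induction hj using Nat.decreasingInduction generalizing t with
  | self => exact nonpos_of_deriv_neg_of_nonneg (hd n le_rfl) (h0 n le_rfl) hdec ht
  | of_succ k hk ih =>
    refine nonpos_of_add_mul_deriv_nonpos (hd k hk.le) (ha (k + 1) (Nat.le_add_left 1 k) hk)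
      (h0 k hk.le) (fun s hs => ?_) ht
    have hrec_k := hrec (k + 1) (Nat.le_add_left 1 k) hk s
    rw [Nat.add_sub_cancel] at hrec_k
    exact hrec_k ▸ ih s hs
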